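/- Suppose K* ∈ ℝ^{k×n} is stable and satisfies K* = γ(R + γBᵀP_{K*}B)⁻¹BᵀP_{K*}A (equivalently E_{K*} = 0), and set Σ* := (τ/2)(R + γBᵀP_{K*}B)⁻¹. Then for every stable K ∈ ℝ^{k×n} and every symmetric positive definite Σ ∈ ℝ^{k×k}, C(K,Σ) ≥ C(K*,Σ*); i.e. the pair (K*,Σ*) minimizes the entropy-regularized cost C over all admissible policy parameters. -/

import Mathlib

open Matrix


noncomputable def spec {m l : ℕ} (M : Matrix (Fin m) (Fin l) ℝ) : ℝ :=
  ‖LinearMap.toContinuousLinearMap (Matrix.toEuclideanLin M)‖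

noncomputable def sigMin {m l : ℕ} (M : Matrix (Fin m) (Fin l) ℝ) : ℝ :=
  sInf {r : ℝ | ∃ x : EuclideanSpace ℝ (Fin l), ‖x‖ = 1 ∧
    r = ‖LinearMap.toContinuousLinearMap (Matrix.toEuclideanLin M) x‖}

noncomputable def frob {m l : ℕ} (M : Matrix (Fin m) (Fin l) ℝ) : ℝ :=
  Real.sqrt (Matrix.trace (Mᵀ * M))

def loewner {m : ℕ} (X Y : Matrix (Fin m) (Fin m) ℝ) : Prop :=
  (Y - X).PosSemidef

noncomputable def Pmat {n k : ℕ} (γ : ℝ) (A : Matrix (Fin n) (Fin n) ℝ)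
    (B : Matrix (Fin n) (Fin k) ℝ) (Q : Matrix (Fin n) (Fin n) ℝ)
    (R : Matrix (Fin k) (Fin k) ℝ) (K : Matrix (Fin k) (Fin n) ℝ) :
    Matrix (Fin n) (Fin n) ℝ :=
  ∑' t : ℕ, γ ^ t • (((A - B * K)ᵀ) ^ t * (Q + Kᵀ * R * K) * (A - B * K) ^ t)

noncomputable def Emat {n k : ℕ} (γ : ℝ) (A : Matrix (Fin n) (Fin n) ℝ)
    (B : Matrix (Fin n) (Fin k) ℝ) (Q : Matrix (Fin n) (Fin n) ℝ)
    (R : Matrix (Fin k) (Fin k) ℝ) (K : Matrix (Fin k) (Fin n) ℝ) :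
    Matrix (Fin k) (Fin n) ℝ :=
  -(γ • (Bᵀ * Pmat γ A B Q R K * (A - B * K))) + R * K

noncomputable def Smat {n k : ℕ} (γ : ℝ) (A : Matrix (Fin n) (Fin n) ℝ)
    (B : Matrix (Fin n) (Fin k) ℝ) (W : Matrix (Fin n) (Fin n) ℝ)
    (D₀ : Matrix (Fin n) (Fin n) ℝ) (K : Matrix (Fin k) (Fin n) ℝ)
    (Sg : Matrix (Fin k) (Fin k) ℝ) : Matrix (Fin n) (Fin n) ℝ :=
  ∑' t : ℕ, γ ^ t •
    ((A - B * K) ^ t * D₀ * ((A - B * K)ᵀ) ^ t +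
      ∑ s ∈ Finset.Icc 1 t,
        (A - B * K) ^ (t - s) * (B * Sg * Bᵀ + W) * ((A - B * K)ᵀ) ^ (t - s))

noncomputable def Cost {n k : ℕ} (γ τ : ℝ) (A : Matrix (Fin n) (Fin n) ℝ)
    (B : Matrix (Fin n) (Fin k) ℝ) (Q : Matrix (Fin n) (Fin n) ℝ)
    (R : Matrix (Fin k) (Fin k) ℝ) (W : Matrix (Fin n) (Fin n) ℝ)
    (D₀ : Matrix (Fin n) (Fin n) ℝ) (K : Matrix (Fin k) (Fin n) ℝ)
    (Sg : Matrix (Fin k) (Fin k) ℝ) : ℝ :=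
  Matrix.trace (D₀ * Pmat γ A B Q R K) +
    (1 / (1 - γ)) *
      (Matrix.trace (Sg * (R + γ • (Bᵀ * Pmat γ A B Q R K * B))) -
        (τ / 2) * ((k : ℝ) + Real.log ((2 * Real.pi) ^ k * Sg.det)) +
        γ * Matrix.trace (W * Pmat γ A B Q R K))

noncomputable def fent {n k : ℕ} (γ τ : ℝ) (A : Matrix (Fin n) (Fin n) ℝ)
    (B : Matrix (Fin n) (Fin k) ℝ) (Q : Matrix (Fin n) (Fin n) ℝ)
    (R : Matrix (Fin k) (Fin k) ℝ) (K : Matrix (Fin k) (Fin n) ℝ)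
    (Sg : Matrix (Fin k) (Fin k) ℝ) : ℝ :=
  (τ / (2 * (1 - γ))) * Real.log Sg.det -
    (1 / (1 - γ)) * Matrix.trace (Sg * (R + γ • (Bᵀ * Pmat γ A B Q R K * B)))

/-!
Write `L_K X = γ (A - BK)ᵀ X (A - BK)`. Stability gives `‖L_K‖ < 1`, so
`P_K = ∑ L_Kᵗ (Q + KᵀRK)` is the unique solution of `P = Q + KᵀRK + L_K P`, and it is positive
semidefinite. Completing the square around `K*`, where `E_{K*} = 0`, shows that `P_K - P_{K*}`
solves the same equation with the positive semidefinite `(K - K*)ᵀ (R + γ Bᵀ P_{K*} B) (K - K*)`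
in place of `Q + KᵀRK`; hence `P_{K*} ⪯ P_K`, and every term of `C` that depends on `P` is
monotone in `P`. What remains is to minimise `tr(Σ M) - (τ/2) log det Σ` with
`M = R + γ Bᵀ P_{K*} B`: the bound `log det X ≤ tr X - k` for `X = (2/τ) M^{1/2} Σ M^{1/2}` shows
that the minimum is attained at `Σ = (τ/2) M⁻¹`.
-/

section
variable {𝕜 E : Type*} [NontriviallyNormedField 𝕜] [NormedAddCommGroup E] [NormedSpace 𝕜 E]
  [CompleteSpace E]

theorem ContinuousLinearMap.eq_add_apply_iff_eq_tsum_pow_apply {L : E →L[𝕜] E} (hL : ‖L‖ < 1)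
    {x c : E} : x = c + L x ↔ x = ∑' t : ℕ, (L ^ t) c := by
  have hSL (y : E) : (∑' t : ℕ, L ^ t) (y - L y) = y := by
    simpa using congr($(geom_series_mul_neg L hL) y)
  have hLS (y : E) : (∑' t : ℕ, L ^ t) y - L ((∑' t : ℕ, L ^ t) y) = y := by
    simpa using congr($(mul_neg_geom_series L hL) y)
  have hS : ∑' t : ℕ, (L ^ t) c = (∑' t : ℕ, L ^ t) c :=
    ((apply 𝕜 E c).map_tsum (summable_geometric_of_norm_lt_one hL)).symm
  rw [hS]
  constructor
  · intro hx
    rw [eq_sub_of_add_eq hx.symm, hSL]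
  · rintro rfl
    exact sub_eq_iff_eq_add.mp (hLS c)

end

namespace Matrix

section
variable {m l : Type*} [Fintype m] [Fintype l]

theorem PosSemidef.transpose_mul_mul_same {P : Matrix m m ℝ} (hP : P.PosSemidef)
    (B : Matrix m l ℝ) : (Bᵀ * P * B).PosSemidef := by
  simpa only [conjTranspose_eq_transpose_of_trivial] using hP.conjTranspose_mul_mul_same B

theorem lqr_completion_of_squares (γ : ℝ) (A Q P : Matrix m m ℝ) (B : Matrix m l ℝ)
    (R : Matrix l l ℝ) (K K' : Matrix l m ℝ) (hP : Pᵀ = P) (hR : Rᵀ = R) :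
    Q + Kᵀ * R * K + γ • ((A - B * K)ᵀ * P * (A - B * K)) =
      Q + K'ᵀ * R * K' + γ • ((A - B * K')ᵀ * P * (A - B * K')) +
        (K - K')ᵀ * (R + γ • (Bᵀ * P * B)) * (K - K') +
        ((K - K')ᵀ * (-(γ • (Bᵀ * P * (A - B * K'))) + R * K') +
          (-(γ • (Bᵀ * P * (A - B * K'))) + R * K')ᵀ * (K - K')) := by
  simp only [transpose_sub, transpose_add, transpose_neg, transpose_mul, transpose_smul,
    transpose_transpose, hP, hR, Matrix.mul_sub, Matrix.sub_mul, Matrix.mul_add, Matrix.add_mul,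
    Matrix.mul_neg, Matrix.neg_mul, Matrix.mul_smul, Matrix.smul_mul, Matrix.mul_assoc,
    smul_sub]
  abel

theorem neg_smul_add_mul_eq_zero_of_eq_gain [DecidableEq l] {γ : ℝ} {A P : Matrix m m ℝ}
    {B : Matrix m l ℝ} {R : Matrix l l ℝ} {K : Matrix l m ℝ}
    (hM : IsUnit (R + γ • (Bᵀ * P * B)).det)
    (hK : K = γ • ((R + γ • (Bᵀ * P * B))⁻¹ * (Bᵀ * P * A))) :
    -(γ • (Bᵀ * P * (A - B * K))) + R * K = 0 := by
  have hMK : (R + γ • (Bᵀ * P * B)) * K = γ • (Bᵀ * P * A) := by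
    rw [hK, Matrix.mul_smul, ← Matrix.mul_assoc, mul_nonsing_inv _ hM, Matrix.one_mul]
  calc -(γ • (Bᵀ * P * (A - B * K))) + R * K
      = (R + γ • (Bᵀ * P * B)) * K - γ • (Bᵀ * P * A) := by
        simp only [Matrix.mul_sub, Matrix.add_mul, Matrix.smul_mul, Matrix.mul_assoc, smul_sub]
        abel
    _ = 0 := by rw [hMK, sub_self]

end

variable {ι : Type*} [Fintype ι]

theorem isClosed_setOf_posSemidef : IsClosed {A : Matrix ι ι ℝ | A.PosSemidef} := by
  simp only [posSemidef_iff_dotProduct_mulVec, Set.ofPred_and, Set.ofPred_forall]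
  refine IsClosed.inter ?_ (isClosed_iInter fun x => ?_)
  · exact isClosed_eq (by fun_prop) (by fun_prop)
  · exact isClosed_le (by fun_prop) (by fun_prop)

theorem posSemidef_tsum {β : Type*} {f : β → Matrix ι ι ℝ} (hf : ∀ i, (f i).PosSemidef) :
    (∑' i, f i).PosSemidef := by
  by_cases hs : Summable f
  · exact isClosed_setOf_posSemidef.mem_of_tendsto hs.hasSum
      (Filter.Eventually.of_forall fun s => posSemidef_sum s fun i _ => hf i)
  · simpa [tsum_eq_zero_of_not_summable hs] using PosSemidef.zero

variable [DecidableEq ι]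

section
open scoped MatrixOrder

theorem PosSemidef.trace_mul_nonneg {X Y : Matrix ι ι ℝ} (hX : X.PosSemidef)
    (hY : Y.PosSemidef) : 0 ≤ (X * Y).trace := by
  have hs : (CFC.sqrt X)ᴴ = CFC.sqrt X := (CFC.sqrt_nonneg X).isSelfAdjoint
  have hXs : CFC.sqrt X * CFC.sqrt X = X := CFC.sqrt_mul_sqrt_self X hX.nonneg
  calc 0 ≤ ((CFC.sqrt X)ᴴ * Y * CFC.sqrt X).trace :=
        (hY.conjTranspose_mul_mul_same _).trace_nonneg
    _ = (X * Y).trace := by rw [hs, trace_mul_cycle, hXs]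

theorem PosDef.card_add_log_det_le_trace {X : Matrix ι ι ℝ} (hX : X.PosDef) :
    (Fintype.card ι : ℝ) + Real.log X.det ≤ X.trace := by
  have hev := hX.eigenvalues_pos
  rw [hX.isHermitian.det_eq_prod_eigenvalues, hX.isHermitian.trace_eq_sum_eigenvalues]
  simp only [RCLike.ofReal_real_eq_id, id]
  rw [Real.log_prod fun i _ => (hev i).ne']
  calc (Fintype.card ι : ℝ) + ∑ i, Real.log (hX.isHermitian.eigenvalues i)
      ≤ Fintype.card ι + ∑ i, (hX.isHermitian.eigenvalues i - 1) := by
        gcongr with i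
        exact Real.log_le_sub_one_of_pos (hev i)
    _ = ∑ i, hX.isHermitian.eigenvalues i := by simp [Finset.sum_sub_distrib]

theorem PosDef.trace_smul_inv_mul_sub_log_det_le {M S : Matrix ι ι ℝ} (hM : M.PosDef)
    (hS : S.PosDef) {c : ℝ} (hc : 0 < c) :
    (c • M⁻¹ * M).trace - c * Real.log (c • M⁻¹).det ≤ (S * M).trace - c * Real.log S.det := by
  set q := CFC.sqrt M
  have hq : qᴴ = q := (CFC.sqrt_nonneg M).isSelfAdjoint
  have hqq : q * q = M := CFC.sqrt_mul_sqrt_self M hM.posSemidef.nonneg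
  have hdetq : q.det * q.det = M.det := by rw [← det_mul, hqq]
  have hdetM := hM.det_pos
  have hqinj : Function.Injective q.mulVec := by
    rw [mulVec_injective_iff_isUnit, isUnit_iff_isUnit_det, isUnit_iff_ne_zero]
    intro h
    rw [h, zero_mul] at hdetq
    exact hdetM.ne' hdetq.symm
  have key :=
    ((hS.conjTranspose_mul_mul_same hqinj).smul (inv_pos.mpr hc)).card_add_log_det_le_trace
  have htr : (c⁻¹ • (qᴴ * S * q)).trace = c⁻¹ * (S * M).trace := by
    rw [trace_smul, hq, trace_mul_cycle, hqq, smul_eq_mul, trace_mul_comm]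
  have hdet : (c⁻¹ • (qᴴ * S * q)).det = c⁻¹ ^ Fintype.card ι * (M.det * S.det) := by
    rw [det_smul, hq, det_mul, det_mul, ← hdetq]; ring
  rw [htr, hdet, Real.log_mul (by positivity) (mul_pos hdetM hS.det_pos).ne', Real.log_pow,
    Real.log_mul hdetM.ne' hS.det_pos.ne', Real.log_inv] at key
  rw [smul_mul, nonsing_inv_mul _ ((isUnit_iff_isUnit_det M).mp hM.isUnit), trace_smul,
    trace_one, det_smul, det_nonsing_inv, Ring.inverse_eq_inv',
    Real.log_mul (by positivity) (inv_pos.mpr hdetM).ne', Real.log_pow, Real.log_inv, smul_eq_mul]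
  have := mul_le_mul_of_nonneg_left key hc.le
  rw [mul_inv_cancel_left₀ hc.ne'] at this
  linear_combination this

end

open scoped Matrix.Norms.L2Operator

noncomputable def steinOp (γ : ℝ) (N : Matrix ι ι ℝ) : Matrix ι ι ℝ →L[ℝ] Matrix ι ι ℝ :=
  γ • ContinuousLinearMap.mulLeftRight ℝ (Matrix ι ι ℝ) Nᵀ N

variable {γ : ℝ} {N : Matrix ι ι ℝ}

theorem steinOp_apply (X : Matrix ι ι ℝ) : steinOp γ N X = γ • (Nᵀ * X * N) := rfl

theorem steinOp_pow_apply (t : ℕ) (X : Matrix ι ι ℝ) :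
    (steinOp γ N ^ t) X = γ ^ t • ((Nᵀ) ^ t * X * N ^ t) := by
  induction t with
  | zero => simp
  | succ t ih =>
    rw [pow_succ']
    change steinOp γ N ((steinOp γ N ^ t) X) = _
    rw [ih, steinOp_apply, Matrix.mul_smul, Matrix.smul_mul, smul_smul, ← pow_succ',
      pow_succ' Nᵀ, pow_succ N]
    simp only [Matrix.mul_assoc]

theorem norm_steinOp_le (hγ : 0 ≤ γ) : ‖steinOp γ N‖ ≤ γ * ‖N‖ ^ 2 :=
  calc ‖steinOp γ N‖ ≤ γ * (‖Nᵀ‖ * ‖N‖) := by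
        unfold steinOp
        refine (norm_smul_le γ (ContinuousLinearMap.mulLeftRight ℝ (Matrix ι ι ℝ) Nᵀ N)).trans ?_
        rw [Real.norm_of_nonneg hγ]
        gcongr
        exact ContinuousLinearMap.opNorm_mulLeftRight_apply_apply_le ℝ _ _ _
    _ = γ * ‖N‖ ^ 2 := by
        rw [← conjTranspose_eq_transpose_of_trivial, l2_opNorm_conjTranspose, sq]

theorem posSemidef_tsum_steinOp_pow_apply (hγ : 0 ≤ γ) {C : Matrix ι ι ℝ}
    (hC : C.PosSemidef) : (∑' t : ℕ, (steinOp γ N ^ t) C).PosSemidef := by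
  refine posSemidef_tsum fun t => ?_
  rw [steinOp_pow_apply, ← transpose_pow]
  exact (hC.transpose_mul_mul_same _).smul (pow_nonneg hγ t)

end Matrix

open scoped Matrix.Norms.L2Operator

theorem loewner.trace_mul_le {n : ℕ} {X Y Y' : Matrix (Fin n) (Fin n) ℝ} (hX : X.PosSemidef)
    (h : loewner Y Y') : (X * Y).trace ≤ (X * Y').trace := by
  have := hX.trace_mul_nonneg h
  rw [Matrix.mul_sub, trace_sub] at this
  linarith

theorem loewner.add_smul_transpose_mul_mul {n k : ℕ} {γ : ℝ} (hγ : 0 ≤ γ)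
    {P P' : Matrix (Fin n) (Fin n) ℝ} (h : loewner P' P) (R : Matrix (Fin k) (Fin k) ℝ)
    (B : Matrix (Fin n) (Fin k) ℝ) :
    loewner (R + γ • (Bᵀ * P' * B)) (R + γ • (Bᵀ * P * B)) := by
  unfold loewner
  rw [add_sub_add_left_eq_sub, ← smul_sub, ← Matrix.sub_mul, ← Matrix.mul_sub]
  exact (h.transpose_mul_mul_same B).smul hγ

theorem norm_steinOp_lt_one_of_spec_lt {n : ℕ} {γ : ℝ} {N : Matrix (Fin n) (Fin n) ℝ}
    (hγ : 0 < γ) (hN : spec N < 1 / Real.sqrt γ) : ‖steinOp γ N‖ < 1 := by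
  have hsq : Real.sqrt γ * ‖N‖ < 1 := by
    rw [← lt_div_iff₀' (Real.sqrt_pos.mpr hγ)]; exact hN
  calc ‖steinOp γ N‖ ≤ γ * ‖N‖ ^ 2 := norm_steinOp_le hγ.le
    _ = (Real.sqrt γ * ‖N‖) ^ 2 := by rw [mul_pow, Real.sq_sqrt hγ.le]
    _ < 1 := by rw [sq_lt_one_iff₀ (by positivity)]; exact hsq

section
variable {n k : ℕ} {γ : ℝ} {A : Matrix (Fin n) (Fin n) ℝ} {B : Matrix (Fin n) (Fin k) ℝ}
  {Q : Matrix (Fin n) (Fin n) ℝ} {R : Matrix (Fin k) (Fin k) ℝ}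

theorem Pmat_eq_tsum (K : Matrix (Fin k) (Fin n) ℝ) :
    Pmat γ A B Q R K = ∑' t : ℕ, (steinOp γ (A - B * K) ^ t) (Q + Kᵀ * R * K) := by
  simp only [Pmat, steinOp_pow_apply]

theorem eq_Pmat_iff (hγ : 0 < γ) {K : Matrix (Fin k) (Fin n) ℝ}
    (hK : spec (A - B * K) < 1 / Real.sqrt γ) {P : Matrix (Fin n) (Fin n) ℝ} :
    P = Q + Kᵀ * R * K + γ • ((A - B * K)ᵀ * P * (A - B * K)) ↔ P = Pmat γ A B Q R K := by
  have hL := norm_steinOp_lt_one_of_spec_lt hγ hK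
  rw [Pmat_eq_tsum, ← ContinuousLinearMap.eq_add_apply_iff_eq_tsum_pow_apply hL]
  rfl

theorem posSemidef_Pmat (hγ : 0 ≤ γ) (hQ : Q.PosSemidef) (hR : R.PosSemidef)
    (K : Matrix (Fin k) (Fin n) ℝ) : (Pmat γ A B Q R K).PosSemidef := by
  rw [Pmat_eq_tsum]
  exact posSemidef_tsum_steinOp_pow_apply hγ (hQ.add (hR.transpose_mul_mul_same K))

theorem loewner_Pmat_of_Emat_eq_zero (hγ : 0 < γ) (hQ : Q.PosSemidef) (hR : R.PosSemidef)
    {K K' : Matrix (Fin k) (Fin n) ℝ} (hK : spec (A - B * K) < 1 / Real.sqrt γ)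
    (hK' : spec (A - B * K') < 1 / Real.sqrt γ) (hE : Emat γ A B Q R K' = 0) :
    loewner (Pmat γ A B Q R K') (Pmat γ A B Q R K) := by
  set P := Pmat γ A B Q R K
  set P' := Pmat γ A B Q R K'
  set Z := (K - K')ᵀ * (R + γ • (Bᵀ * P' * B)) * (K - K')
  have hP'psd : P'.PosSemidef := posSemidef_Pmat hγ.le hQ hR K'
  have hZ : Z.PosSemidef :=
    (hR.add ((hP'psd.transpose_mul_mul_same B).smul hγ.le)).transpose_mul_mul_same _
  have hP : P = Q + Kᵀ * R * K + steinOp γ (A - B * K) P := (eq_Pmat_iff hγ hK).mpr rfl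
  have hP' : P' = Q + K'ᵀ * R * K' + γ • ((A - B * K')ᵀ * P' * (A - B * K')) :=
    (eq_Pmat_iff hγ hK').mpr rfl
  have hsq := lqr_completion_of_squares γ A Q P' B R K K'
    ((conjTranspose_eq_transpose_of_trivial P').symm.trans hP'psd.1)
    ((conjTranspose_eq_transpose_of_trivial R).symm.trans hR.1)
  rw [show -(γ • (Bᵀ * P' * (A - B * K'))) + R * K' = 0 from hE, ← hP', ← steinOp_apply] at hsq
  simp only [transpose_zero, Matrix.mul_zero, Matrix.zero_mul, add_zero] at hsq
  have hC : Q + Kᵀ * R * K = P' + Z - steinOp γ (A - B * K) P' := by rw [← hsq]; abel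
  have hdiff : P - P' = Z + steinOp γ (A - B * K) (P - P') := by
    conv_lhs => rw [hP, hC]
    rw [map_sub]
    abel
  have hL := norm_steinOp_lt_one_of_spec_lt hγ hK
  rw [ContinuousLinearMap.eq_add_apply_iff_eq_tsum_pow_apply hL] at hdiff
  unfold loewner
  rw [hdiff]
  exact posSemidef_tsum_steinOp_pow_apply hγ.le hZ

end

theorem Cost_le_Cost_of_loewner {n k : ℕ} {γ : ℝ} (τ : ℝ) (hγ0 : 0 ≤ γ) (hγ1 : γ < 1)
    {A : Matrix (Fin n) (Fin n) ℝ} {B : Matrix (Fin n) (Fin k) ℝ} {Q : Matrix (Fin n) (Fin n) ℝ}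
    {R : Matrix (Fin k) (Fin k) ℝ} {W : Matrix (Fin n) (Fin n) ℝ} (hW : W.PosSemidef)
    {D₀ : Matrix (Fin n) (Fin n) ℝ} (hD₀ : D₀.PosSemidef) {K K' : Matrix (Fin k) (Fin n) ℝ}
    {S S' : Matrix (Fin k) (Fin k) ℝ} (hS : S.PosDef) (hS' : S'.PosDef)
    (hP : loewner (Pmat γ A B Q R K') (Pmat γ A B Q R K))
    (hent : (S' * (R + γ • (Bᵀ * Pmat γ A B Q R K' * B))).trace - τ / 2 * Real.log S'.det ≤
      (S * (R + γ • (Bᵀ * Pmat γ A B Q R K' * B))).trace - τ / 2 * Real.log S.det) :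
    Cost γ τ A B Q R W D₀ K' S' ≤ Cost γ τ A B Q R W D₀ K S := by
  have hD := hP.trace_mul_le hD₀
  have hWP := mul_le_mul_of_nonneg_left (hP.trace_mul_le hW) hγ0
  have hSM := (hP.add_smul_transpose_mul_mul hγ0 R B).trace_mul_le hS.posSemidef
  have hlog {X : Matrix (Fin k) (Fin k) ℝ} (hX : X.PosDef) :
      Real.log ((2 * Real.pi) ^ k * X.det) = k * Real.log (2 * Real.pi) + Real.log X.det := by
    rw [Real.log_mul (by positivity) hX.det_pos.ne', Real.log_pow]
  unfold Cost
  rw [hlog hS, hlog hS']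
  gcongr ?_ + 1 / (1 - γ) * ?_
  linarith

theorem stmt1_general (n k : ℕ)
    (γ τ : ℝ) (hγ0 : 0 < γ) (hγ1 : γ < 1) (hτ : 0 < τ)
    (A : Matrix (Fin n) (Fin n) ℝ) (B : Matrix (Fin n) (Fin k) ℝ)
    (Q : Matrix (Fin n) (Fin n) ℝ) (hQ : Q.PosSemidef)
    (R : Matrix (Fin k) (Fin k) ℝ) (hR : R.PosDef)
    (W : Matrix (Fin n) (Fin n) ℝ) (hW : W.PosSemidef)
    (D₀ : Matrix (Fin n) (Fin n) ℝ) (hD₀ : D₀.PosSemidef)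
    (Kstar : Matrix (Fin k) (Fin n) ℝ)
    (hKstar : spec (A - B * Kstar) < 1 / Real.sqrt γ)
    (hfix : Kstar =
      γ • ((R + γ • (Bᵀ * Pmat γ A B Q R Kstar * B))⁻¹ * (Bᵀ * Pmat γ A B Q R Kstar * A)))
    (Sgstar : Matrix (Fin k) (Fin k) ℝ)
    (hSgstar : Sgstar = (τ / 2) • (R + γ • (Bᵀ * Pmat γ A B Q R Kstar * B))⁻¹)
    (K : Matrix (Fin k) (Fin n) ℝ) (hK : spec (A - B * K) < 1 / Real.sqrt γ)
    (Sg : Matrix (Fin k) (Fin k) ℝ) (hSg : Sg.PosDef) :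
    Cost γ τ A B Q R W D₀ Kstar Sgstar ≤ Cost γ τ A B Q R W D₀ K Sg := by
  have hM : (R + γ • (Bᵀ * Pmat γ A B Q R Kstar * B)).PosDef :=
    hR.add_posSemidef
      (((posSemidef_Pmat hγ0.le hQ hR.posSemidef Kstar).transpose_mul_mul_same B).smul hγ0.le)
  have hE : Emat γ A B Q R Kstar = 0 :=
    neg_smul_add_mul_eq_zero_of_eq_gain ((isUnit_iff_isUnit_det _).mp hM.isUnit) hfix
  have hP := loewner_Pmat_of_Emat_eq_zero hγ0 hQ hR.posSemidef hK hKstar hE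
  have hτ2 : 0 < τ / 2 := half_pos hτ
  subst hSgstar
  exact Cost_le_Cost_of_loewner τ hγ0.le hγ1 hW hD₀ hSg (hM.inv.smul hτ2) hP
    (hM.trace_smul_inv_mul_sub_log_det_le hSg hτ2)

/-- The pair `(K*, Σ*)` minimizes the entropy-regularized LQC cost `C` over all
stable `K` and symmetric positive definite `Σ`. -/
theorem stmt1 (n k : ℕ) (hn : 0 < n) (hk : 0 < k)
    (γ τ : ℝ) (hγ0 : 0 < γ) (hγ1 : γ < 1) (hτ : 0 < τ)
    (A : Matrix (Fin n) (Fin n) ℝ) (B : Matrix (Fin n) (Fin k) ℝ)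
    (Q : Matrix (Fin n) (Fin n) ℝ) (hQ : Q.PosSemidef)
    (R : Matrix (Fin k) (Fin k) ℝ) (hR : R.PosDef)
    (W : Matrix (Fin n) (Fin n) ℝ) (hW : W.PosSemidef)
    (D₀ : Matrix (Fin n) (Fin n) ℝ) (hD₀ : D₀.PosSemidef) (hμ : 0 < sigMin D₀)
    (Kstar : Matrix (Fin k) (Fin n) ℝ)
    (hKstar : spec (A - B * Kstar) < 1 / Real.sqrt γ)
    (hfix : Kstar =
      γ • ((R + γ • (Bᵀ * Pmat γ A B Q R Kstar * B))⁻¹ * (Bᵀ * Pmat γ A B Q R Kstar * A)))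
    (Sgstar : Matrix (Fin k) (Fin k) ℝ)
    (hSgstar : Sgstar = (τ / 2) • (R + γ • (Bᵀ * Pmat γ A B Q R Kstar * B))⁻¹)
    (K : Matrix (Fin k) (Fin n) ℝ) (hK : spec (A - B * K) < 1 / Real.sqrt γ)
    (Sg : Matrix (Fin k) (Fin k) ℝ) (hSg : Sg.PosDef) :
    Cost γ τ A B Q R W D₀ Kstar Sgstar ≤ Cost γ τ A B Q R W D₀ K Sg :=
  stmt1_general n k γ τ hγ0 hγ1 hτ A B Q hQ R hR W hW D₀ hD₀ Kstar hKstar hfix Sgstar hSgstar K hK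
    Sg hSg
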